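/- arXiv:2403.19500 — 2 statements merged into one kernel-verified Lean document; each statement's English description precedes it below -/
import Mathlib

section
/- Fix positive integers D and R, basis functions φ^{(d)} : ℝ → ℝ^{M_d}, and symmetric positive semidefinite matrices Λ^{(d)} ∈ ℝ^{M_d × M_d}. Suppose the DR columns W^{(d)}_{:,r} ∈ ℝ^{M_d} (d = 1,…,D, r = 1,…,R) of the CPD cores are mutually independent random vectors, each W^{(d)}_{:,r} with mean zero and second-moment matrix E[W^{(d)}_{:,r} (W^{(d)}_{:,r})ᵀ] = R^{-1/D} Λ^{(d)}. Then for every x, x' ∈ ℝ^D the CPD-constrained kernel machine f_CPD(x) = Σ_{r=1}^R ∏_{d=1}^D φ^{(d)}(x_d)ᵀ W^{(d)}_{:,r} satisfies, exactly for every finite R: E[f_CPD(x)] = 0 and E[f_CPD(x) f_CPD(x')] = ∏_{d=1}^D φ^{(d)}(x_d)ᵀ Λ^{(d)} φ^{(d)}(x_d'). -/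
open Finset MeasureTheory ProbabilityTheory

lemma cpd_aux_prod_integral {Ω ι : Type*} [MeasurableSpace Ω] {μ : Measure Ω}
    [IsProbabilityMeasure μ] [DecidableEq ι]
    (Y : ι → Ω → ℝ) (hm : ∀ i, Measurable (Y i))
    (hI : iIndepFun Y μ)
    (hint : ∀ i, Integrable (Y i) μ) (s : Finset ι) :
    Integrable (fun ω => ∏ i ∈ s, Y i ω) μ ∧
    (∫ ω, ∏ i ∈ s, Y i ω ∂μ) = ∏ i ∈ s, ∫ ω, Y i ω ∂μ := by
  classical
  induction s using Finset.induction with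
  | empty => simp [integrable_const]
  | @insert j s hj ih =>
    have hIndep : IndepFun (Y j) (∏ i ∈ s, Y i) μ :=
      (hI.indepFun_finsetProd_of_notMem hm hj).symm
    have hps : (∏ i ∈ s, Y i) = fun ω => ∏ i ∈ s, Y i ω := by
      funext ω; simp
    have hintp : Integrable (∏ i ∈ s, Y i) μ := by rw [hps]; exact ih.1
    have hmul : Integrable (fun ω => Y j ω * ∏ i ∈ s, Y i ω) μ := by
      have := hIndep.integrable_mul (hint j) hintp
      simpa [hps, Pi.mul_def] using this
    constructor
    · simpa [Finset.prod_insert hj] using hmul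
    · have := hIndep.integral_mul_eq_mul_integral (hint j).aestronglyMeasurable hintp.aestronglyMeasurable
      simp only [hps] at this
      simp only [Finset.prod_insert hj]
      calc (∫ ω, Y j ω * ∏ i ∈ s, Y i ω ∂μ)
          = (∫ ω, Y j ω ∂μ) * ∫ ω, ∏ i ∈ s, Y i ω ∂μ := by
            simpa [Pi.mul_apply] using this
        _ = (∫ ω, Y j ω ∂μ) * ∏ i ∈ s, ∫ ω, Y i ω ∂μ := by rw [ih.2]

/-- **Exact mean and covariance of the CPD-constrained kernel machine with i.i.d.-type
priors on the core columns.**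

Fix `D, R ≥ 1`, basis functions `φ⁽ᵈ⁾ : ℝ → ℝ^{M_d}` and symmetric positive
semidefinite matrices `Λ⁽ᵈ⁾`.  If the `D·R` columns `W⁽ᵈ⁾_{:,r} ∈ ℝ^{M_d}` of the CPD
cores are mutually independent random vectors, each with mean zero and second-moment
matrix `R^{-1/D} Λ⁽ᵈ⁾`, then for all inputs `x, x' ∈ ℝ^D` the CPD-constrained kernel
machine `f_CPD(x) = Σ_r ∏_d φ⁽ᵈ⁾(x_d)ᵀ W⁽ᵈ⁾_{:,r}` satisfies, exactly for every
finite `R`:  `E[f_CPD(x)] = 0` and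
`E[f_CPD(x) f_CPD(x')] = ∏_d φ⁽ᵈ⁾(x_d)ᵀ Λ⁽ᵈ⁾ φ⁽ᵈ⁾(x_d')`. -/
theorem cpd_kernel_machine_exact_moments
    {Ω : Type*} [MeasurableSpace Ω] (μ : Measure Ω) [IsProbabilityMeasure μ]
    (D R : ℕ) (hD : 0 < D) (hR : 0 < R) (M : Fin D → ℕ)
    (φ : ∀ d : Fin D, ℝ → (Fin (M d) → ℝ))
    (Λ : ∀ d : Fin D, Matrix (Fin (M d)) (Fin (M d)) ℝ)
    (hΛ : ∀ d, (Λ d).PosSemidef)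
    (W : ∀ d : Fin D, Fin R → Ω → (Fin (M d) → ℝ))
    (hmeas : ∀ d r, Measurable (W d r))
    (hindep : iIndepFun
      (fun p : Fin D × Fin R => W p.1 p.2) μ)
    (hint : ∀ d r, Integrable (W d r) μ)
    (hint2 : ∀ (d : Fin D) (r : Fin R) (i j : Fin (M d)),
      Integrable (fun ω => W d r ω i * W d r ω j) μ)
    (hmean : ∀ (d : Fin D) (r : Fin R) (i : Fin (M d)), ∫ ω, W d r ω i ∂μ = 0)
    (hcov : ∀ (d : Fin D) (r : Fin R) (i j : Fin (M d)),
      ∫ ω, W d r ω i * W d r ω j ∂μ = (R : ℝ) ^ (-(1 : ℝ) / (D : ℝ)) * Λ d i j)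
    (x x' : Fin D → ℝ) :
    (∫ ω, ∑ r : Fin R, ∏ d, (∑ i, φ d (x d) i * W d r ω i) ∂μ) = 0
    ∧
    (∫ ω, (∑ r : Fin R, ∏ d, (∑ i, φ d (x d) i * W d r ω i)) *
            (∑ r : Fin R, ∏ d, (∑ i, φ d (x' d) i * W d r ω i)) ∂μ)
      = ∏ d, (∑ i, ∑ j, φ d (x d) i * Λ d i j * φ d (x' d) j) := by
  classical
  set c : ℝ := (R : ℝ) ^ (-(1 : ℝ) / (D : ℝ)) with hc
  have hDne : (D : ℝ) ≠ 0 := Nat.cast_ne_zero.mpr hD.ne'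
  have hRne : (R : ℝ) ≠ 0 := Nat.cast_ne_zero.mpr hR.ne'
  -- coordinates are integrable
  have coordInt : ∀ (d : Fin D) (r : Fin R) (i : Fin (M d)),
      Integrable (fun ω => W d r ω i) μ := fun d r i =>
    (ContinuousLinearMap.proj (R := ℝ) (φ := fun _ : Fin (M d) => ℝ) i).integrable_comp
      (hint d r)
  -- independence after composition
  have keyI : ∀ (g : ∀ p : Fin D × Fin R, (Fin (M p.1) → ℝ) → ℝ), (∀ p, Measurable (g p)) →
      iIndepFun
        (fun p ω => g p (W p.1 p.2 ω)) μ :=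
    fun g hg => hindep.comp g hg
  -- measurability of linear functionals
  have hmlin : ∀ (d : Fin D) (b : Fin (M d) → ℝ),
      Measurable (fun v : Fin (M d) → ℝ => ∑ i, b i * v i) := by
    intro d b
    exact Finset.measurable_sum _ fun i _ => (measurable_pi_apply i).const_mul _
  -- integrability of linear functionals of W
  have hilin : ∀ (d : Fin D) (r : Fin R) (b : Fin (M d) → ℝ),
      Integrable (fun ω => ∑ i, b i * W d r ω i) μ := by
    intro d r b
    exact integrable_finset_sum _ fun i _ => (coordInt d r i).const_mul _
  -- mean of linear functionals
  have hE : ∀ (d : Fin D) (r : Fin R) (b : Fin (M d) → ℝ),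
      (∫ ω, ∑ i, b i * W d r ω i ∂μ) = 0 := by
    intro d r b
    rw [integral_finset_sum _ fun i _ => (coordInt d r i).const_mul _]
    simp [integral_const_mul, hmean]
  -- product over the image finset
  have himg : ∀ (r : Fin R) (F : Fin D × Fin R → ℝ),
      ∏ p ∈ Finset.univ.image (fun d : Fin D => (d, r)), F p = ∏ d, F (d, r) := by
    intro r F
    exact Finset.prod_image (fun u _ v _ h => (Prod.ext_iff.mp h).1)
  set d0 : Fin D := ⟨0, hD⟩ with hd0
  -- Part 1 building block: for a generic "coefficient" function a
  have h1 : ∀ (r : Fin R) (z : Fin D → ℝ),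
      Integrable (fun ω => ∏ d, ∑ i, φ d (z d) i * W d r ω i) μ ∧
      (∫ ω, ∏ d, ∑ i, φ d (z d) i * W d r ω i ∂μ) = 0 := by
    intro r z
    set Y : Fin D × Fin R → Ω → ℝ :=
      fun p ω => ∑ i, φ p.1 (z p.1) i * W p.1 p.2 ω i with hY
    have hYm : ∀ p, Measurable (Y p) := fun p =>
      (hmlin p.1 (φ p.1 (z p.1))).comp (hmeas p.1 p.2)
    have hYI : iIndepFun Y μ :=
      keyI (fun p v => ∑ i, φ p.1 (z p.1) i * v i) (fun p => hmlin p.1 _)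
    have hYint : ∀ p, Integrable (Y p) μ := fun p => hilin p.1 p.2 _
    obtain ⟨hInt, hVal⟩ := cpd_aux_prod_integral Y hYm hYI hYint
      (Finset.univ.image (fun d : Fin D => (d, r)))
    have hrw : (fun ω => ∏ p ∈ Finset.univ.image (fun d : Fin D => (d, r)), Y p ω)
        = fun ω => ∏ d, ∑ i, φ d (z d) i * W d r ω i := by
      funext ω; exact himg r _
    constructor
    · rw [← hrw]; exact hInt
    · have : (∫ ω, ∏ p ∈ Finset.univ.image (fun d : Fin D => (d, r)), Y p ω ∂μ)
          = (∫ ω, ∏ d, ∑ i, φ d (z d) i * W d r ω i ∂μ) := by rw [hrw]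
      rw [← this, hVal]
      refine Finset.prod_eq_zero (Finset.mem_image_of_mem _ (Finset.mem_univ d0)) ?_
      exact hE d0 r _
  -- Part 1
  have part1 : (∫ ω, ∑ r : Fin R, ∏ d, (∑ i, φ d (x d) i * W d r ω i) ∂μ) = 0 := by
    rw [integral_finset_sum _ fun r _ => (h1 r x).1]
    simp [(h1 _ x).2]
  refine ⟨part1, ?_⟩
  -- Part 2: per-pair expectations
  have h2 : ∀ r s : Fin R,
      Integrable (fun ω => (∏ d, ∑ i, φ d (x d) i * W d r ω i) *
        (∏ d, ∑ i, φ d (x' d) i * W d s ω i)) μ ∧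
      (∫ ω, (∏ d, ∑ i, φ d (x d) i * W d r ω i) *
        (∏ d, ∑ i, φ d (x' d) i * W d s ω i) ∂μ)
      = if r = s then (R : ℝ)⁻¹ * ∏ d, (∑ i, ∑ j, φ d (x d) i * Λ d i j * φ d (x' d) j)
        else 0 := by
    intro r s
    by_cases hrs : r = s
    · subst hrs
      simp only [if_pos rfl]
      set V : Fin D × Fin R → Ω → ℝ := fun p ω =>
        (∑ i, φ p.1 (x p.1) i * W p.1 p.2 ω i) * (∑ j, φ p.1 (x' p.1) j * W p.1 p.2 ω j)
        with hV
      have hVm : ∀ p, Measurable (V p) := fun p =>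
        ((hmlin p.1 (φ p.1 (x p.1))).comp (hmeas p.1 p.2)).mul
          ((hmlin p.1 (φ p.1 (x' p.1))).comp (hmeas p.1 p.2))
      have hVI : iIndepFun V μ :=
        keyI (fun p v => (∑ i, φ p.1 (x p.1) i * v i) * (∑ j, φ p.1 (x' p.1) j * v j))
          (fun p => (hmlin p.1 _).mul (hmlin p.1 _))
      have hVexp : ∀ p : Fin D × Fin R, V p = fun ω =>
          ∑ i, ∑ j, (φ p.1 (x p.1) i * φ p.1 (x' p.1) j) * (W p.1 p.2 ω i * W p.1 p.2 ω j) := by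
        intro p; funext ω
        simp only [hV, Finset.sum_mul_sum]
        exact Finset.sum_congr rfl fun i _ => Finset.sum_congr rfl fun j _ => by ring
      have hVint : ∀ p, Integrable (V p) μ := by
        intro p
        rw [hVexp p]
        exact integrable_finset_sum _ fun i _ => integrable_finset_sum _ fun j _ =>
          (hint2 p.1 p.2 i j).const_mul _
      have hVE : ∀ p : Fin D × Fin R,
          (∫ ω, V p ω ∂μ) = c * ∑ i, ∑ j, φ p.1 (x p.1) i * Λ p.1 i j * φ p.1 (x' p.1) j := by
        intro p
        simp only [hVexp p]
        rw [integral_finset_sum _ fun i _ => integrable_finset_sum _ fun j _ =>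
          (hint2 p.1 p.2 i j).const_mul _]
        rw [Finset.mul_sum]
        refine Finset.sum_congr rfl fun i _ => ?_
        rw [integral_finset_sum _ fun j _ => (hint2 p.1 p.2 i j).const_mul _, Finset.mul_sum]
        refine Finset.sum_congr rfl fun j _ => ?_
        rw [integral_const_mul, hcov p.1 p.2 i j]
        ring
      obtain ⟨hInt, hVal⟩ := cpd_aux_prod_integral V hVm hVI hVint
        (Finset.univ.image (fun d : Fin D => (d, r)))
      have hrw : (fun ω => ∏ p ∈ Finset.univ.image (fun d : Fin D => (d, r)), V p ω)
          = fun ω => (∏ d, ∑ i, φ d (x d) i * W d r ω i) *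
              (∏ d, ∑ i, φ d (x' d) i * W d r ω i) := by
        funext ω
        rw [himg r, ← Finset.prod_mul_distrib]
      constructor
      · rw [← hrw]; exact hInt
      · have hval2 : (∫ ω, (∏ d, ∑ i, φ d (x d) i * W d r ω i) *
            (∏ d, ∑ i, φ d (x' d) i * W d r ω i) ∂μ)
            = ∏ p ∈ Finset.univ.image (fun d : Fin D => (d, r)), ∫ ω, V p ω ∂μ := by
          rw [← hVal]; congr 1; rw [hrw]
        rw [hval2, himg r]
        have : ∀ d : Fin D, (∫ ω, V (d, r) ω ∂μ)
            = c * ∑ i, ∑ j, φ d (x d) i * Λ d i j * φ d (x' d) j := fun d => hVE (d, r)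
        rw [Finset.prod_congr rfl fun d _ => this d, Finset.prod_mul_distrib,
          Finset.prod_const]
        have hcD : c ^ (Finset.univ : Finset (Fin D)).card = (R : ℝ)⁻¹ := by
          rw [Finset.card_univ, Fintype.card_fin, hc,
            ← Real.rpow_natCast ((R : ℝ) ^ (-(1 : ℝ) / (D : ℝ))) D,
            ← Real.rpow_mul (Nat.cast_nonneg R)]
          have hmul : (-(1 : ℝ) / (D : ℝ)) * (D : ℕ) = -1 := by field_simp
          rw [hmul, Real.rpow_neg_one]
        rw [hcD]; simp
    · simp only [if_neg hrs]
      set a : ∀ p : Fin D × Fin R, Fin (M p.1) → ℝ := fun p =>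
        if p.2 = s then φ p.1 (x' p.1) else φ p.1 (x p.1) with ha
      set Y : Fin D × Fin R → Ω → ℝ :=
        fun p ω => ∑ i, a p i * W p.1 p.2 ω i with hY
      have hYm : ∀ p, Measurable (Y p) := fun p =>
        (hmlin p.1 (a p)).comp (hmeas p.1 p.2)
      have hYI : iIndepFun Y μ :=
        keyI (fun p v => ∑ i, a p i * v i) (fun p => hmlin p.1 _)
      have hYint : ∀ p, Integrable (Y p) μ := fun p => hilin p.1 p.2 _
      have hdisj : Disjoint (Finset.univ.image (fun d : Fin D => (d, r)))
          (Finset.univ.image (fun d : Fin D => (d, s))) := by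
        simp only [Finset.disjoint_left, Finset.mem_image]
        rintro p ⟨u, -, rfl⟩ ⟨v, -, hv⟩
        exact hrs ((Prod.ext_iff.mp hv.symm).2)
      obtain ⟨hInt, hVal⟩ := cpd_aux_prod_integral Y hYm hYI hYint
        ((Finset.univ.image (fun d : Fin D => (d, r))) ∪
          (Finset.univ.image (fun d : Fin D => (d, s))))
      have har : ∀ d : Fin D, a (d, r) = φ d (x d) := by
        intro d; simp [ha, hrs]
      have has : ∀ d : Fin D, a (d, s) = φ d (x' d) := by
        intro d; simp [ha]
      have hrw : (fun ω => ∏ p ∈ ((Finset.univ.image (fun d : Fin D => (d, r))) ∪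
          (Finset.univ.image (fun d : Fin D => (d, s)))), Y p ω)
          = fun ω => (∏ d, ∑ i, φ d (x d) i * W d r ω i) *
              (∏ d, ∑ i, φ d (x' d) i * W d s ω i) := by
        funext ω
        rw [Finset.prod_union hdisj, himg r, himg s]
        congr 1
        · exact Finset.prod_congr rfl fun d _ => by rw [hY]; simp only [har d]
        · exact Finset.prod_congr rfl fun d _ => by rw [hY]; simp only [has d]
      constructor
      · rw [← hrw]; exact hInt
      · have hval2 : (∫ ω, (∏ d, ∑ i, φ d (x d) i * W d r ω i) *
            (∏ d, ∑ i, φ d (x' d) i * W d s ω i) ∂μ)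
            = ∏ p ∈ ((Finset.univ.image (fun d : Fin D => (d, r))) ∪
                (Finset.univ.image (fun d : Fin D => (d, s)))), ∫ ω, Y p ω ∂μ := by
          rw [← hVal]; congr 1; rw [hrw]
        rw [hval2]
        refine Finset.prod_eq_zero (Finset.mem_union_left _
          (Finset.mem_image_of_mem _ (Finset.mem_univ d0))) ?_
        exact hE d0 r _
  -- assemble Part 2
  have hexp : (fun ω => (∑ r : Fin R, ∏ d, (∑ i, φ d (x d) i * W d r ω i)) *
      (∑ r : Fin R, ∏ d, (∑ i, φ d (x' d) i * W d r ω i)))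
      = fun ω => ∑ r : Fin R, ∑ s : Fin R,
          (∏ d, ∑ i, φ d (x d) i * W d r ω i) * (∏ d, ∑ i, φ d (x' d) i * W d s ω i) := by
    funext ω
    rw [Finset.sum_mul_sum]
  calc (∫ ω, (∑ r : Fin R, ∏ d, (∑ i, φ d (x d) i * W d r ω i)) *
            (∑ r : Fin R, ∏ d, (∑ i, φ d (x' d) i * W d r ω i)) ∂μ)
      = ∫ ω, ∑ r : Fin R, ∑ s : Fin R,
          (∏ d, ∑ i, φ d (x d) i * W d r ω i) * (∏ d, ∑ i, φ d (x' d) i * W d s ω i) ∂μ := by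
        rw [hexp]
    _ = ∑ r : Fin R, ∑ s : Fin R, ∫ ω,
          (∏ d, ∑ i, φ d (x d) i * W d r ω i) * (∏ d, ∑ i, φ d (x' d) i * W d s ω i) ∂μ := by
        rw [integral_finset_sum _ fun r _ => integrable_finset_sum _ fun s _ => (h2 r s).1]
        exact Finset.sum_congr rfl fun r _ =>
          integral_finset_sum _ fun s _ => (h2 r s).1
    _ = ∑ r : Fin R, ∑ s : Fin R,
          (if r = s then (R : ℝ)⁻¹ * ∏ d, (∑ i, ∑ j, φ d (x d) i * Λ d i j * φ d (x' d) j)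
            else 0) := by
        exact Finset.sum_congr rfl fun r _ => Finset.sum_congr rfl fun s _ => (h2 r s).2
    _ = ∑ r : Fin R, (R : ℝ)⁻¹ * ∏ d, (∑ i, ∑ j, φ d (x d) i * Λ d i j * φ d (x' d) j) := by
        refine Finset.sum_congr rfl fun r _ => ?_
        rw [Finset.sum_ite_eq univ r
          (fun _ => (R : ℝ)⁻¹ * ∏ d, (∑ i, ∑ j, φ d (x d) i * Λ d i j * φ d (x' d) j))]
        simp
    _ = ∏ d, (∑ i, ∑ j, φ d (x d) i * Λ d i j * φ d (x' d) j) := by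
        rw [Finset.sum_const, Finset.card_univ, Fintype.card_fin, nsmul_eq_mul]
        rw [← mul_assoc, mul_inv_cancel₀ hRne, one_mul]
end

section
/- Fix a positive integer D, ranks R_0 = R_D = 1 and R_1,…,R_{D-1} ∈ ℕ, basis functions φ^{(d)} : ℝ → ℝ^{M_d}, and symmetric positive semidefinite matrices Λ^{(d)} ∈ ℝ^{M_d × M_d}. Suppose the fibers W^{(d)}_{r_{d-1},:,r_d} ∈ ℝ^{M_d} of the TT cores (over all d = 1,…,D, r_{d-1} = 1,…,R_{d-1}, r_d = 1,…,R_d) are mutually independent random vectors, each with mean zero and second-moment matrix E[W^{(d)}_{r_{d-1},:,r_d} (W^{(d)}_{r_{d-1},:,r_d})ᵀ] = (R_{d-1} R_d)^{-1/2} Λ^{(d)}. Then for every x, x' ∈ ℝ^D the TT-constrained kernel machine f_TT satisfies, exactly for every choice of finite ranks: E[f_TT(x)] = 0 and E[f_TT(x) f_TT(x')] = ∏_{d=1}^D φ^{(d)}(x_d)ᵀ Λ^{(d)} φ^{(d)}(x_d'). -/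
open Finset MeasureTheory ProbabilityTheory

private lemma aux_integral_prod {Ω : Type*} {ι : Type*} [MeasurableSpace Ω] {μ : Measure Ω}
    [IsProbabilityMeasure μ] (X : ι → Ω → ℝ)
    (hindep : iIndepFun X μ)
    (hmeas : ∀ i, Measurable (X i)) (hint : ∀ i, Integrable (X i) μ) (s : Finset ι) :
    Integrable (fun ω => ∏ i ∈ s, X i ω) μ ∧
      (∫ ω, ∏ i ∈ s, X i ω ∂μ) = ∏ i ∈ s, ∫ ω, X i ω ∂μ := by
  classical
  induction s using Finset.cons_induction with
  | empty => simp
  | cons i s hi ih =>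
    have hind : IndepFun (fun ω => ∏ j ∈ s, X j ω) (X i) μ := by
      have h := hindep.indepFun_finsetProd_of_notMem hmeas hi
      have he : (∏ j ∈ s, X j) = fun ω => ∏ j ∈ s, X j ω := by
        funext ω; simp
      rwa [he] at h
    have hint' : Integrable (fun ω => (∏ j ∈ s, X j ω) * X i ω) μ :=
      hind.integrable_mul ih.1 (hint i)
    constructor
    · simp only [Finset.prod_cons]
      exact hint'.congr (by filter_upwards with ω using by ring)
    · have h2 := hind.integral_mul_eq_mul_integral ih.1.aestronglyMeasurable (hint i).aestronglyMeasurable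
      simp only [Finset.prod_cons]
      calc (∫ ω, X i ω * ∏ j ∈ s, X j ω ∂μ)
          = ∫ ω, (∏ j ∈ s, X j ω) * X i ω ∂μ := by
            congr 1; funext ω; ring
        _ = (∫ ω, ∏ j ∈ s, X j ω ∂μ) * ∫ ω, X i ω ∂μ := h2
        _ = (∫ ω, X i ω ∂μ) * ∏ j ∈ s, ∫ ω, X j ω ∂μ := by rw [ih.2]; ring

/-- selector function for TT fibers -/
private def ttg {D : ℕ} {M : Fin D → ℕ} {R : Fin (D + 1) → ℕ}
    (φ : ∀ d : Fin D, ℝ → (Fin (M d) → ℝ)) (v : Fin D → ℝ)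
    (r : ∀ i : Fin (D + 1), Fin (R i))
    (i : Σ d : Fin D, Fin (R d.castSucc) × Fin (R d.succ)) (y : Fin (M i.1) → ℝ) : ℝ :=
  if i.2.1 = r i.1.castSucc ∧ i.2.2 = r i.1.succ then ∑ m, φ i.1 (v i.1) m * y m else 1

private lemma ttg_meas {D : ℕ} {M : Fin D → ℕ} {R : Fin (D + 1) → ℕ}
    (φ : ∀ d : Fin D, ℝ → (Fin (M d) → ℝ)) (v : Fin D → ℝ)
    (r : ∀ i : Fin (D + 1), Fin (R i))
    (i : Σ d : Fin D, Fin (R d.castSucc) × Fin (R d.succ)) :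
    Measurable (ttg φ v r i) := by
  unfold ttg
  by_cases h : i.2.1 = r i.1.castSucc ∧ i.2.2 = r i.1.succ
  · simp only [if_pos h]
    exact Finset.measurable_sum _ fun m _ => (measurable_pi_apply m).const_mul _
  · simp only [if_neg h]; exact measurable_const

private lemma ttg_prod {Ω : Type*} {D : ℕ} {M : Fin D → ℕ} {R : Fin (D + 1) → ℕ}
    (φ : ∀ d : Fin D, ℝ → (Fin (M d) → ℝ)) (v : Fin D → ℝ)
    (r : ∀ i : Fin (D + 1), Fin (R i))
    (W : ∀ d : Fin D, Ω → Fin (R d.castSucc) → Fin (M d) → Fin (R d.succ) → ℝ) (ω : Ω) :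
    (∏ i : Σ d : Fin D, Fin (R d.castSucc) × Fin (R d.succ),
        ttg φ v r i (fun m => W i.1 ω i.2.1 m i.2.2))
      = ∏ d, (∑ m, φ d (v d) m * W d ω (r d.castSucc) m (r d.succ)) := by
  rw [← Finset.univ_sigma_univ, Finset.prod_sigma]
  refine Finset.prod_congr rfl fun d _ => ?_
  rw [Fintype.prod_prod_type]
  simp [ttg, ite_and, Finset.prod_ite_eq']

/-- collapse a product over all fibers of an if-selected value -/
private lemma ttg_prod_val {D : ℕ} {R : Fin (D + 1) → ℕ}
    (r : ∀ i : Fin (D + 1), Fin (R i)) (c : Fin D → ℝ) :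
    (∏ i : Σ d : Fin D, Fin (R d.castSucc) × Fin (R d.succ),
        (if i.2.1 = r i.1.castSucc ∧ i.2.2 = r i.1.succ then c i.1 else 1))
      = ∏ d, c d := by
  rw [← Finset.univ_sigma_univ, Finset.prod_sigma]
  refine Finset.prod_congr rfl fun d _ => ?_
  rw [Fintype.prod_prod_type]
  simp [ite_and, Finset.prod_ite_eq']

private lemma tt_tuple_ext {D : ℕ} (hD : 0 < D) {R : Fin (D + 1) → ℕ}
    (r r' : ∀ i : Fin (D + 1), Fin (R i))
    (h : ∀ d : Fin D, r d.castSucc = r' d.castSucc ∧ r d.succ = r' d.succ) : r = r' := by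
  funext j
  induction j using Fin.lastCases with
  | last =>
    have hd : (Fin.last D) = (⟨D - 1, by omega⟩ : Fin D).succ := by
      ext; simp [Fin.succ]; omega
    rw [hd]; exact (h _).2
  | cast j => exact (h j).1

private lemma tt_card_mul_prod {D : ℕ} (R : Fin (D + 1) → ℕ) (hRpos : ∀ i, 0 < R i)
    (hR0 : R 0 = 1) (hRD : R (Fin.last D) = 1) :
    ((Fintype.card (∀ i : Fin (D + 1), Fin (R i)) : ℝ)) *
      ∏ d : Fin D, ((R d.castSucc * R d.succ : ℕ) : ℝ) ^ (-(1 : ℝ) / 2) = 1 := by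
  have hN : Fintype.card (∀ i : Fin (D + 1), Fin (R i)) = ∏ i, R i := by
    simp [Fintype.card_pi]
  set N : ℕ := ∏ i, R i with hNdef
  have hNpos : 0 < N := Finset.prod_pos (fun i _ => hRpos i)
  have h1 : ∏ d : Fin D, (R d.castSucc * R d.succ) = N ^ 2 := by
    rw [Finset.prod_mul_distrib]
    have ha : ∏ d : Fin D, R d.castSucc = N := by
      rw [hNdef, Fin.prod_univ_castSucc (f := R), hRD, mul_one]
    have hb : ∏ d : Fin D, R d.succ = N := by
      rw [hNdef, Fin.prod_univ_succ (f := R), hR0, one_mul]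
    rw [ha, hb]; ring
  have h2 : ∏ d : Fin D, ((R d.castSucc * R d.succ : ℕ) : ℝ) ^ (-(1 : ℝ) / 2)
      = ((N : ℝ) ^ (2 : ℕ)) ^ (-(1 : ℝ) / 2) := by
    rw [Real.finset_prod_rpow _ _ (fun i _ => by positivity) _]
    rw [← Nat.cast_prod, h1]; push_cast; ring_nf
  rw [hN, h2]
  rw [← Real.rpow_natCast (N : ℝ) 2, ← Real.rpow_mul (by positivity)]
  norm_num
  rw [Real.rpow_neg_one]
  field_simp

/-- **Exact mean and covariance of the TT-constrained kernel machine with independent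
priors on the core fibers.**

Fix `D ≥ 1`, ranks `R : Fin (D+1) → ℕ` with `R 0 = R D = 1` (all ranks positive),
basis functions `φ⁽ᵈ⁾ : ℝ → ℝ^{M_d}` and symmetric positive semidefinite matrices
`Λ⁽ᵈ⁾`.  If the fibers `W⁽ᵈ⁾_{r_{d-1},:,r_d} ∈ ℝ^{M_d}` of the TT cores (over all
`d, r_{d-1}, r_d`) are mutually independent random vectors, each with mean zero and
second-moment matrix `(R_{d-1} R_d)^{-1/2} Λ⁽ᵈ⁾`, then for all `x, x' ∈ ℝ^D` the
TT-constrained kernel machine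
`f_TT(x) = Σ_{r₀,…,r_D} ∏_d Z⁽ᵈ⁾_{r_{d-1},r_d}(x_d)`, with
`Z⁽ᵈ⁾_{r_{d-1},r_d}(x_d) = Σ_m φ⁽ᵈ⁾_m(x_d) W⁽ᵈ⁾_{r_{d-1},m,r_d}`, satisfies, exactly
for every choice of finite ranks:  `E[f_TT(x)] = 0` and
`E[f_TT(x) f_TT(x')] = ∏_d φ⁽ᵈ⁾(x_d)ᵀ Λ⁽ᵈ⁾ φ⁽ᵈ⁾(x_d')`. -/
theorem tt_kernel_machine_exact_moments
    {Ω : Type*} [MeasurableSpace Ω] (μ : Measure Ω) [IsProbabilityMeasure μ]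
    (D : ℕ) (hD : 0 < D) (M : Fin D → ℕ)
    (R : Fin (D + 1) → ℕ) (hRpos : ∀ i, 0 < R i)
    (hR0 : R 0 = 1) (hRD : R (Fin.last D) = 1)
    (φ : ∀ d : Fin D, ℝ → (Fin (M d) → ℝ))
    (Λ : ∀ d : Fin D, Matrix (Fin (M d)) (Fin (M d)) ℝ)
    (hΛ : ∀ d, (Λ d).PosSemidef)
    (W : ∀ d : Fin D, Ω → Fin (R d.castSucc) → Fin (M d) → Fin (R d.succ) → ℝ)
    (hmeas : ∀ (d : Fin D) (p : Fin (R d.castSucc)) (q : Fin (R d.succ)),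
      Measurable (fun ω => (fun m => W d ω p m q)))
    (hindep : iIndepFun
      (fun i : Σ d : Fin D, Fin (R d.castSucc) × Fin (R d.succ) =>
        fun ω => (fun m => W i.1 ω i.2.1 m i.2.2)) μ)
    (hint : ∀ (d : Fin D) (p : Fin (R d.castSucc)) (q : Fin (R d.succ))
      (m : Fin (M d)), Integrable (fun ω => W d ω p m q) μ)
    (hint2 : ∀ (d : Fin D) (p : Fin (R d.castSucc)) (q : Fin (R d.succ))
      (m m' : Fin (M d)), Integrable (fun ω => W d ω p m q * W d ω p m' q) μ)
    (hmean : ∀ (d : Fin D) (p : Fin (R d.castSucc)) (q : Fin (R d.succ))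
      (m : Fin (M d)), ∫ ω, W d ω p m q ∂μ = 0)
    (hcov : ∀ (d : Fin D) (p : Fin (R d.castSucc)) (q : Fin (R d.succ))
      (m m' : Fin (M d)),
      ∫ ω, W d ω p m q * W d ω p m' q ∂μ
        = ((R d.castSucc * R d.succ : ℕ) : ℝ) ^ (-(1 : ℝ) / 2) * Λ d m m')
    (x x' : Fin D → ℝ) :
    (∫ ω, ∑ r : ∀ i : Fin (D + 1), Fin (R i),
        ∏ d, (∑ m, φ d (x d) m * W d ω (r d.castSucc) m (r d.succ)) ∂μ) = 0
    ∧
    (∫ ω, (∑ r : ∀ i : Fin (D + 1), Fin (R i),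
            ∏ d, (∑ m, φ d (x d) m * W d ω (r d.castSucc) m (r d.succ))) *
          (∑ r : ∀ i : Fin (D + 1), Fin (R i),
            ∏ d, (∑ m, φ d (x' d) m * W d ω (r d.castSucc) m (r d.succ))) ∂μ)
      = ∏ d, (∑ m, ∑ m', φ d (x d) m * Λ d m m' * φ d (x' d) m') := by
  classical
  -- abbreviations
  set cR : Fin D → ℝ := fun d => ((R d.castSucc * R d.succ : ℕ) : ℝ) ^ (-(1 : ℝ) / 2) with hcR
  set S : Fin D → ℝ :=
    fun d => ∑ m, ∑ m', φ d (x d) m * Λ d m m' * φ d (x' d) m' with hS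
  -- the key independence/product-integral tool
  have key : ∀ (g : ∀ i : Σ d : Fin D, Fin (R d.castSucc) × Fin (R d.succ),
        (Fin (M i.1) → ℝ) → ℝ),
      (∀ i, Measurable (g i)) →
      (∀ i, Integrable (fun ω => g i (fun m => W i.1 ω i.2.1 m i.2.2)) μ) →
      Integrable (fun ω => ∏ i, g i (fun m => W i.1 ω i.2.1 m i.2.2)) μ ∧
        (∫ ω, ∏ i, g i (fun m => W i.1 ω i.2.1 m i.2.2) ∂μ)
          = ∏ i, ∫ ω, g i (fun m => W i.1 ω i.2.1 m i.2.2) ∂μ := by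
    intro g hg1 hg2
    exact aux_integral_prod _ (hindep.comp g hg1)
      (fun i => (hg1 i).comp (hmeas i.1 i.2.1 i.2.2)) hg2 Finset.univ
  -- integrability of a single selector factor
  have hgint : ∀ (v : Fin D → ℝ) (r : ∀ i : Fin (D + 1), Fin (R i)) i,
      Integrable (fun ω => ttg φ v r i (fun m => W i.1 ω i.2.1 m i.2.2)) μ := by
    intro v r i
    unfold ttg
    by_cases h : i.2.1 = r i.1.castSucc ∧ i.2.2 = r i.1.succ
    · simp only [if_pos h]
      exact integrable_finset_sum _ fun m _ => (hint i.1 i.2.1 i.2.2 m).const_mul _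
    · simp only [if_neg h]; exact integrable_const 1
  -- matched single factor has zero mean
  have hgzero : ∀ (v : Fin D → ℝ) (r : ∀ i : Fin (D + 1), Fin (R i)) i,
      i.2.1 = r i.1.castSucc ∧ i.2.2 = r i.1.succ →
      (∫ ω, ttg φ v r i (fun m => W i.1 ω i.2.1 m i.2.2) ∂μ) = 0 := by
    intro v r i h
    unfold ttg
    simp only [if_pos h]
    rw [integral_finset_sum _ (fun m _ => (hint i.1 i.2.1 i.2.2 m).const_mul _)]
    simp [integral_const_mul, hmean]
  ---- MEAN PART ----
  have hmean_term : ∀ r : ∀ i : Fin (D + 1), Fin (R i),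
      (∫ ω, ∏ d, (∑ m, φ d (x d) m * W d ω (r d.castSucc) m (r d.succ)) ∂μ) = 0 := by
    intro r
    have hk := key (ttg φ x r) (fun i => ttg_meas φ x r i) (fun i => hgint x r i)
    have h1 : (∫ ω, ∏ d, (∑ m, φ d (x d) m * W d ω (r d.castSucc) m (r d.succ)) ∂μ)
        = ∫ ω, ∏ i, ttg φ x r i (fun m => W i.1 ω i.2.1 m i.2.2) ∂μ :=
      integral_congr_ae (Filter.Eventually.of_forall fun ω => (ttg_prod φ x r W ω).symm)
    rw [h1, hk.2]
    exact Finset.prod_eq_zero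
      (Finset.mem_univ ⟨⟨0, hD⟩, (r (Fin.castSucc ⟨0, hD⟩), r (Fin.succ ⟨0, hD⟩))⟩)
      (hgzero x r _ ⟨rfl, rfl⟩)
  have hmean_int : ∀ r : ∀ i : Fin (D + 1), Fin (R i),
      Integrable (fun ω => ∏ d, (∑ m, φ d (x d) m * W d ω (r d.castSucc) m (r d.succ))) μ := by
    intro r
    have hk := key (ttg φ x r) (fun i => ttg_meas φ x r i) (fun i => hgint x r i)
    exact hk.1.congr (Filter.Eventually.of_forall fun ω => ttg_prod φ x r W ω)
  constructor
  · rw [integral_finset_sum _ (fun r _ => hmean_int r)]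
    exact Finset.sum_eq_zero fun r _ => hmean_term r
  ---- COVARIANCE PART ----
  -- pair factor as function of fiber
  · -- per-fiber pair facts
    have hGmeas : ∀ (r r' : ∀ i : Fin (D + 1), Fin (R i)) i,
        Measurable (fun y => ttg φ x r i y * ttg φ x' r' i y) :=
      fun r r' i => (ttg_meas φ x r i).mul (ttg_meas φ x' r' i)
    have hexp : ∀ (r r' : ∀ i : Fin (D + 1), Fin (R i))
        (i : Σ d : Fin D, Fin (R d.castSucc) × Fin (R d.succ)),
        (fun ω => (∑ m, φ i.1 (x i.1) m * W i.1 ω i.2.1 m i.2.2)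
            * (∑ m, φ i.1 (x' i.1) m * W i.1 ω i.2.1 m i.2.2))
          = fun ω => ∑ m, ∑ m', (φ i.1 (x i.1) m * φ i.1 (x' i.1) m')
            * (W i.1 ω i.2.1 m i.2.2 * W i.1 ω i.2.1 m' i.2.2) := by
      intro r r' i
      funext ω
      rw [Finset.sum_mul_sum]
      exact Finset.sum_congr rfl fun m _ => Finset.sum_congr rfl fun m' _ => by ring
    have hGint : ∀ (r r' : ∀ i : Fin (D + 1), Fin (R i)) i,
        Integrable (fun ω => ttg φ x r i (fun m => W i.1 ω i.2.1 m i.2.2)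
          * ttg φ x' r' i (fun m => W i.1 ω i.2.1 m i.2.2)) μ := by
      intro r r' i
      unfold ttg
      by_cases h1 : i.2.1 = r i.1.castSucc ∧ i.2.2 = r i.1.succ
      · by_cases h2 : i.2.1 = r' i.1.castSucc ∧ i.2.2 = r' i.1.succ
        · simp only [if_pos h1, if_pos h2]
          rw [hexp r r' i]
          exact integrable_finset_sum _ fun m _ => integrable_finset_sum _ fun m' _ =>
            (hint2 i.1 i.2.1 i.2.2 m m').const_mul _
        · simp only [if_pos h1, if_neg h2, mul_one]
          exact integrable_finset_sum _ fun m _ => (hint i.1 i.2.1 i.2.2 m).const_mul _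
      · by_cases h2 : i.2.1 = r' i.1.castSucc ∧ i.2.2 = r' i.1.succ
        · simp only [if_neg h1, if_pos h2, one_mul]
          exact integrable_finset_sum _ fun m _ => (hint i.1 i.2.1 i.2.2 m).const_mul _
        · simp only [if_neg h1, if_neg h2, mul_one]
          exact integrable_const 1
    have hGzero : ∀ (r r' : ∀ i : Fin (D + 1), Fin (R i)) i,
        (i.2.1 = r i.1.castSucc ∧ i.2.2 = r i.1.succ) →
        ¬(i.2.1 = r' i.1.castSucc ∧ i.2.2 = r' i.1.succ) →
        (∫ ω, ttg φ x r i (fun m => W i.1 ω i.2.1 m i.2.2)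
          * ttg φ x' r' i (fun m => W i.1 ω i.2.1 m i.2.2) ∂μ) = 0 := by
      intro r r' i h1 h2
      unfold ttg
      simp only [if_pos h1, if_neg h2, mul_one]
      rw [integral_finset_sum _ (fun m _ => (hint i.1 i.2.1 i.2.2 m).const_mul _)]
      simp [integral_const_mul, hmean]
    have hGboth : ∀ (r r' : ∀ i : Fin (D + 1), Fin (R i)) i,
        (i.2.1 = r i.1.castSucc ∧ i.2.2 = r i.1.succ) →
        (i.2.1 = r' i.1.castSucc ∧ i.2.2 = r' i.1.succ) →
        (∫ ω, ttg φ x r i (fun m => W i.1 ω i.2.1 m i.2.2)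
          * ttg φ x' r' i (fun m => W i.1 ω i.2.1 m i.2.2) ∂μ) = cR i.1 * S i.1 := by
      intro r r' i h1 h2
      unfold ttg
      simp only [if_pos h1, if_pos h2]
      rw [hexp r r' i]
      rw [integral_finset_sum _ (fun m _ => integrable_finset_sum _ fun m' _ =>
        (hint2 i.1 i.2.1 i.2.2 m m').const_mul _)]
      have : ∀ m, (∫ ω, ∑ m', (φ i.1 (x i.1) m * φ i.1 (x' i.1) m')
            * (W i.1 ω i.2.1 m i.2.2 * W i.1 ω i.2.1 m' i.2.2) ∂μ)
          = ∑ m', (φ i.1 (x i.1) m * φ i.1 (x' i.1) m') * (cR i.1 * Λ i.1 m m') := by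
        intro m
        rw [integral_finset_sum _ (fun m' _ => (hint2 i.1 i.2.1 i.2.2 m m').const_mul _)]
        refine Finset.sum_congr rfl fun m' _ => ?_
        rw [integral_const_mul, hcov i.1 i.2.1 i.2.2 m m']
      rw [Finset.sum_congr rfl fun m _ => this m]
      rw [hS, Finset.mul_sum]
      refine Finset.sum_congr rfl fun m _ => ?_
      rw [Finset.mul_sum]
      refine Finset.sum_congr rfl fun m' _ => ?_
      ring
    have hGnone : ∀ (r r' : ∀ i : Fin (D + 1), Fin (R i)) i,
        ¬(i.2.1 = r i.1.castSucc ∧ i.2.2 = r i.1.succ) →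
        ¬(i.2.1 = r' i.1.castSucc ∧ i.2.2 = r' i.1.succ) →
        (∫ ω, ttg φ x r i (fun m => W i.1 ω i.2.1 m i.2.2)
          * ttg φ x' r' i (fun m => W i.1 ω i.2.1 m i.2.2) ∂μ) = 1 := by
      intro r r' i h1 h2
      unfold ttg
      simp only [if_neg h1, if_neg h2, mul_one]
      simp
    -- the pointwise product identity
    have hpe : ∀ (r r' : ∀ i : Fin (D + 1), Fin (R i)) (ω : Ω),
        (∏ i : Σ d : Fin D, Fin (R d.castSucc) × Fin (R d.succ),
          (ttg φ x r i (fun m => W i.1 ω i.2.1 m i.2.2)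
            * ttg φ x' r' i (fun m => W i.1 ω i.2.1 m i.2.2)))
        = (∏ d, (∑ m, φ d (x d) m * W d ω (r d.castSucc) m (r d.succ)))
          * (∏ d, (∑ m, φ d (x' d) m * W d ω (r' d.castSucc) m (r' d.succ))) := by
      intro r r' ω
      rw [Finset.prod_mul_distrib, ttg_prod, ttg_prod]
    have hterm_int : ∀ (r r' : ∀ i : Fin (D + 1), Fin (R i)),
        Integrable (fun ω =>
          (∏ d, (∑ m, φ d (x d) m * W d ω (r d.castSucc) m (r d.succ)))
           * (∏ d, (∑ m, φ d (x' d) m * W d ω (r' d.castSucc) m (r' d.succ)))) μ := by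
      intro r r'
      have hk := key (fun i y => ttg φ x r i y * ttg φ x' r' i y)
        (hGmeas r r') (hGint r r')
      exact hk.1.congr (Filter.Eventually.of_forall fun ω => hpe r r' ω)
    have hterm : ∀ (r r' : ∀ i : Fin (D + 1), Fin (R i)),
        (∫ ω, (∏ d, (∑ m, φ d (x d) m * W d ω (r d.castSucc) m (r d.succ)))
           * (∏ d, (∑ m, φ d (x' d) m * W d ω (r' d.castSucc) m (r' d.succ))) ∂μ)
        = if r' = r then ∏ d, (cR d * S d) else 0 := by
      intro r r'
      have hk := key (fun i y => ttg φ x r i y * ttg φ x' r' i y)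
        (hGmeas r r') (hGint r r')
      have h1 : (∫ ω, (∏ d, (∑ m, φ d (x d) m * W d ω (r d.castSucc) m (r d.succ)))
           * (∏ d, (∑ m, φ d (x' d) m * W d ω (r' d.castSucc) m (r' d.succ))) ∂μ)
          = ∫ ω, ∏ i : Σ d : Fin D, Fin (R d.castSucc) × Fin (R d.succ),
              (ttg φ x r i (fun m => W i.1 ω i.2.1 m i.2.2)
                * ttg φ x' r' i (fun m => W i.1 ω i.2.1 m i.2.2)) ∂μ :=
        integral_congr_ae (Filter.Eventually.of_forall fun ω => (hpe r r' ω).symm)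
      rw [h1, hk.2]
      by_cases hrr : r' = r
      · subst hrr
        rw [if_pos rfl]
        have h2 : ∀ i : Σ d : Fin D, Fin (R d.castSucc) × Fin (R d.succ),
            (∫ ω, ttg φ x r' i (fun m => W i.1 ω i.2.1 m i.2.2)
              * ttg φ x' r' i (fun m => W i.1 ω i.2.1 m i.2.2) ∂μ)
            = if i.2.1 = r' i.1.castSucc ∧ i.2.2 = r' i.1.succ then cR i.1 * S i.1 else 1 := by
          intro i
          by_cases h : i.2.1 = r' i.1.castSucc ∧ i.2.2 = r' i.1.succ
          · rw [if_pos h]; exact hGboth r' r' i h h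
          · rw [if_neg h]; exact hGnone r' r' i h h
        rw [Finset.prod_congr rfl fun i _ => h2 i]
        exact ttg_prod_val r' (fun d => cR d * S d)
      · rw [if_neg hrr]
        have hex : ∃ d : Fin D,
            ¬(r d.castSucc = r' d.castSucc ∧ r d.succ = r' d.succ) := by
          by_contra hall
          push_neg at hall
          exact hrr (tt_tuple_ext hD r r' hall).symm
        obtain ⟨d, hd⟩ := hex
        refine Finset.prod_eq_zero
          (Finset.mem_univ ⟨d, (r d.castSucc, r d.succ)⟩) ?_
        exact hGzero r r' ⟨d, (r d.castSucc, r d.succ)⟩ ⟨rfl, rfl⟩ hd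
    -- assemble
    have hswap : (∫ ω, (∑ r : ∀ i : Fin (D + 1), Fin (R i),
            ∏ d, (∑ m, φ d (x d) m * W d ω (r d.castSucc) m (r d.succ))) *
          (∑ r : ∀ i : Fin (D + 1), Fin (R i),
            ∏ d, (∑ m, φ d (x' d) m * W d ω (r d.castSucc) m (r d.succ))) ∂μ)
        = ∑ r : ∀ i : Fin (D + 1), Fin (R i), ∑ r' : ∀ i : Fin (D + 1), Fin (R i),
            ∫ ω, (∏ d, (∑ m, φ d (x d) m * W d ω (r d.castSucc) m (r d.succ)))
             * (∏ d, (∑ m, φ d (x' d) m * W d ω (r' d.castSucc) m (r' d.succ))) ∂μ := by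
      rw [integral_congr_ae (Filter.Eventually.of_forall fun ω =>
        Finset.sum_mul_sum Finset.univ Finset.univ _ _)]
      rw [integral_finset_sum _ (fun r _ => integrable_finset_sum _ fun r' _ => hterm_int r r')]
      exact Finset.sum_congr rfl fun r _ =>
        integral_finset_sum _ (fun r' _ => hterm_int r r')
    rw [hswap]
    have hsum2 : ∀ r : ∀ i : Fin (D + 1), Fin (R i),
        (∑ r' : ∀ i : Fin (D + 1), Fin (R i),
          ∫ ω, (∏ d, (∑ m, φ d (x d) m * W d ω (r d.castSucc) m (r d.succ)))
            * (∏ d, (∑ m, φ d (x' d) m * W d ω (r' d.castSucc) m (r' d.succ))) ∂μ)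
        = ∏ d, (cR d * S d) := by
      intro r
      rw [Finset.sum_congr rfl fun r' _ => hterm r r']
      simp
    rw [Finset.sum_congr rfl fun r _ => hsum2 r]
    rw [Finset.sum_const, Finset.card_univ, nsmul_eq_mul, Finset.prod_mul_distrib]
    have hc := tt_card_mul_prod R hRpos hR0 hRD
    calc (Fintype.card (∀ i : Fin (D + 1), Fin (R i)) : ℝ)
          * ((∏ d, cR d) * ∏ d, S d)
        = ((Fintype.card (∀ i : Fin (D + 1), Fin (R i)) : ℝ) * ∏ d, cR d) * ∏ d, S d := by
          ring
      _ = ∏ d, S d := by simp only [hcR]; rw [hc, one_mul]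
end
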